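/- arXiv:2005.02971 — 5 statements merged into one kernel-verified Lean document; each statement's English description precedes it below -/
import Mathlib

section
/- Let M be an m×m real symmetric positive semidefinite matrix. Then the operator norm of M as a map from (ℝ^m, ℓ∞ norm) to (ℝ^m, ℓ1 norm) satisfies trace(M) ≤ ‖M‖_{∞,1} ≤ 2^m · trace(M). -/
/-!
Positive semidefiniteness, tested on `eᵢ ± eⱼ`, gives `|M i j| ≤ (M i i + M j j) / 2`; summing,
`‖M u‖₁ ≤ ∑ i j, |M i j| ≤ m · tr M ≤ 2 ^ m · tr M` whenever `‖u‖_∞ ≤ 1`.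

For the lower bound, average the quadratic form `σᵀ M σ` over the `2 ^ m` sign vectors
`σ ∈ {±1}ᵐ`: the off-diagonal terms cancel and the average is `tr M`. Hence some sign vector has
`tr M ≤ σᵀ M σ ≤ ‖M σ‖₁`, and `‖σ‖_∞ = 1`.
-/

open Finset Matrix

section SignVectors

variable {ι : Type*}

def signVector (s : ι → Bool) (k : ι) : ℝ := if s k then 1 else -1

lemma abs_signVector (s : ι → Bool) (k : ι) : |signVector s k| = 1 := by
  unfold signVector; split_ifs <;> simp

lemma signVector_mul_self (s : ι → Bool) (k : ι) : signVector s k * signVector s k = 1 := by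
  unfold signVector; split_ifs <;> norm_num

lemma signVector_update_not_self [DecidableEq ι] (s : ι → Bool) (j : ι) :
    signVector (Function.update s j (!s j)) j = -signVector s j := by
  unfold signVector; cases s j <;> simp

variable [Fintype ι] [DecidableEq ι]

lemma sum_signVector_mul_signVector (i j : ι) :
    ∑ s : ι → Bool, signVector s i * signVector s j =
      if i = j then 2 ^ Fintype.card ι else 0 := by
  split_ifs with hij
  · subst hij
    simp [signVector_mul_self]
  · -- flipping the `j`-th sign is an involution of the sign vectors that negates each summand
    refine sum_ninvolution (fun s => Function.update s j (!s j)) (fun s => ?_) (fun s _ h => ?_)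
      (fun _ => mem_univ _) (fun s => by simp)
    · rw [signVector_update_not_self]
      simp only [signVector, Function.update_of_ne hij]
      ring
    · simpa using congrFun h j

lemma sum_signVector_dotProduct_mulVec (M : Matrix ι ι ℝ) :
    ∑ s : ι → Bool, signVector s ⬝ᵥ M *ᵥ signVector s = 2 ^ Fintype.card ι * M.trace := by
  calc ∑ s : ι → Bool, signVector s ⬝ᵥ M *ᵥ signVector s
      = ∑ i, ∑ j, M i j * ∑ s : ι → Bool, signVector s i * signVector s j := by
        simp only [dotProduct, mulVec, mul_sum]
        rw [sum_comm]
        refine sum_congr rfl fun i _ => ?_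
        rw [sum_comm]
        exact sum_congr rfl fun j _ => sum_congr rfl fun s _ => by ring
    _ = 2 ^ Fintype.card ι * M.trace := by
        simp [sum_signVector_mul_signVector, trace, mul_sum, mul_comm]

lemma exists_trace_le_signVector_dotProduct_mulVec (M : Matrix ι ι ℝ) :
    ∃ s : ι → Bool, M.trace ≤ signVector s ⬝ᵥ M *ᵥ signVector s := by
  obtain ⟨s, -, hs⟩ := exists_le_of_sum_le univ_nonempty
    (f := fun _ => M.trace) (g := fun s => signVector s ⬝ᵥ M *ᵥ signVector s) <| by
    simp [sum_signVector_dotProduct_mulVec]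
  exact ⟨s, hs⟩

end SignVectors

section

variable {ι κ : Type*} [Fintype ι] [Fintype κ]

lemma dotProduct_le_sum_abs {u v : ι → ℝ} (hu : ∀ i, |u i| ≤ 1) : u ⬝ᵥ v ≤ ∑ i, |v i| :=
  sum_le_sum fun i _ => calc
    u i * v i ≤ |u i| * |v i| := abs_mul (u i) (v i) ▸ le_abs_self _
    _ ≤ |v i| := mul_le_of_le_one_left (abs_nonneg _) (hu i)

lemma sum_abs_mulVec_le (M : Matrix κ ι ℝ) {u : ι → ℝ} (hu : ∀ j, |u j| ≤ 1) :
    ∑ i, |(M *ᵥ u) i| ≤ ∑ i, ∑ j, |M i j| :=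
  sum_le_sum fun i _ => calc
    |(M *ᵥ u) i| ≤ ∑ j, |M i j * u j| := abs_sum_le_sum_abs _ _
    _ ≤ ∑ j, |M i j| := sum_le_sum fun j _ => by
      rw [abs_mul]; exact mul_le_of_le_one_right (abs_nonneg _) (hu j)

namespace Matrix.PosSemidef

variable {M : Matrix ι ι ℝ}

lemma abs_apply_le (hM : M.PosSemidef) (i j : ι) : |M i j| ≤ (M i i + M j j) / 2 := by
  classical
  have hsymm : M j i = M i j := by simpa using congrFun (congrFun hM.isHermitian i) j
  have hplus := hM.dotProduct_mulVec_nonneg (Pi.single i 1 + Pi.single j (1 : ℝ))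
  have hminus := hM.dotProduct_mulVec_nonneg (Pi.single i 1 + Pi.single j (-1 : ℝ))
  simp [mulVec_add, dotProduct_add, add_dotProduct, hsymm] at hplus hminus
  rw [abs_le]
  constructor <;> linarith

lemma sum_abs_apply_le (hM : M.PosSemidef) :
    ∑ i, ∑ j, |M i j| ≤ Fintype.card ι * M.trace := calc
  ∑ i, ∑ j, |M i j| ≤ ∑ i, ∑ j, (M i i + M j j) / 2 :=
    sum_le_sum fun i _ => sum_le_sum fun j _ => hM.abs_apply_le i j
  _ = Fintype.card ι * M.trace := by
    simp only [add_div, sum_add_distrib, sum_const, card_univ, nsmul_eq_mul, trace,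
      diag_apply, mul_sum]
    rw [← sum_add_distrib]
    exact sum_congr rfl fun i _ => by ring

end Matrix.PosSemidef

def infOneNormValues (M : Matrix ι ι ℝ) : Set ℝ :=
  {y | ∃ u : ι → ℝ, (∀ i, |u i| ≤ 1) ∧ (∃ i, |u i| = 1) ∧ y = ∑ i, |M.mulVec u i|}

lemma bddAbove_infOneNormValues (M : Matrix ι ι ℝ) : BddAbove (infOneNormValues M) := by
  refine ⟨∑ i, ∑ j, |M i j|, ?_⟩
  rintro y ⟨u, hu, -, rfl⟩
  exact sum_abs_mulVec_le M hu

lemma trace_le_sSup_infOneNormValues (M : Matrix ι ι ℝ) :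
    M.trace ≤ sSup (infOneNormValues M) := by
  classical
  cases isEmpty_or_nonempty ι with
  | inl _ => simp [infOneNormValues, trace]
  | inr hι =>
    obtain ⟨s, hs⟩ := exists_trace_le_signVector_dotProduct_mulVec M
    obtain ⟨i₀⟩ := hι
    have hmem : ∑ i, |(M *ᵥ signVector s) i| ∈ infOneNormValues M :=
      ⟨signVector s, fun i => (abs_signVector s i).le, ⟨i₀, abs_signVector s i₀⟩, rfl⟩
    calc M.trace ≤ signVector s ⬝ᵥ M *ᵥ signVector s := hs
      _ ≤ ∑ i, |(M *ᵥ signVector s) i| :=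
        dotProduct_le_sum_abs fun i => (abs_signVector s i).le
      _ ≤ sSup (infOneNormValues M) := le_csSup (bddAbove_infOneNormValues M) hmem

lemma sSup_infOneNormValues_le {M : Matrix ι ι ℝ} (hM : M.PosSemidef) :
    sSup (infOneNormValues M) ≤ Fintype.card ι * M.trace := by
  refine Real.sSup_le ?_ (by have := hM.trace_nonneg; positivity)
  rintro y ⟨u, hu, -, rfl⟩
  exact (sum_abs_mulVec_le M hu).trans hM.sum_abs_apply_le

end

/-- For an m×m real symmetric PSD matrix M,
trace(M) ≤ ‖M‖_{∞,1} ≤ 2^m · trace(M), where ‖M‖_{∞,1} is the operator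
norm from (ℝ^m, ℓ∞) to (ℝ^m, ℓ1), i.e. the sup of ‖Mu‖₁ over ‖u‖_∞ = 1. -/
theorem stmt0 (m : ℕ) (M : Matrix (Fin m) (Fin m) ℝ) (hM : M.PosSemidef) :
    M.trace ≤ sSup {y : ℝ | ∃ u : Fin m → ℝ,
        (∀ i, |u i| ≤ 1) ∧ (∃ i, |u i| = 1) ∧ y = ∑ i, |M.mulVec u i|} ∧
    sSup {y : ℝ | ∃ u : Fin m → ℝ,
        (∀ i, |u i| ≤ 1) ∧ (∃ i, |u i| = 1) ∧ y = ∑ i, |M.mulVec u i|}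
      ≤ 2 ^ m * M.trace := by
  refine ⟨trace_le_sSup_infOneNormValues M, (sSup_infOneNormValues_le hM).trans ?_⟩
  rw [Fintype.card_fin]
  gcongr
  · exact hM.trace_nonneg
  · exact_mod_cast Nat.lt_two_pow_self.le
end

section
/- Let M be an m×m real symmetric positive semidefinite matrix and let V be the 2^m × m matrix whose rows enumerate all sign vectors in {-1,1}^m. Then the maximum over x ∈ {-1,1}^m of ‖Mx‖_1 equals the maximum diagonal entry of V M Vᵀ. -/
/-! The diagonal entries of `V M Vᵀ` are the values `xᵀ M x` on sign vectors `x`, and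
`xᵀ M x ≤ ‖M x‖₁` trivially. Conversely, since `(t - x)ᵀ M (t - x) ≥ 0` we have
`2 tᵀ M x ≤ tᵀ M t + xᵀ M x`; choosing for `t` the sign pattern of `M x` makes the left-hand side
`2 ‖M x‖₁`, which is therefore at most twice the largest value of the quadratic form on sign
vectors. -/

open Matrix

section

variable {ι n R : Type*} [Fintype n] [CommRing R]

theorem Matrix.mul_mul_transpose_apply (A : Matrix ι n R) (M : Matrix n n R) (i j : ι) :
    (A * M * Aᵀ) i j = A i ⬝ᵥ M *ᵥ A j := by
  rw [Matrix.mul_assoc, mul_apply']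
  rfl

variable [LinearOrder R] [IsStrictOrderedRing R]

theorem Matrix.PosSemidef.two_mul_dotProduct_mulVec_le [StarRing R] [TrivialStar R]
    {M : Matrix n n R} (hM : M.PosSemidef) (x y : n → R) :
    2 * (x ⬝ᵥ M *ᵥ y) ≤ x ⬝ᵥ M *ᵥ x + y ⬝ᵥ M *ᵥ y := by
  have hsymm : y ⬝ᵥ M *ᵥ x = x ⬝ᵥ M *ᵥ y := by
    rw [← dotProduct_transpose_mulVec, ← conjTranspose_eq_transpose_of_trivial, hM.1.eq]
  have := hM.dotProduct_mulVec_nonneg (x - y)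
  simp only [star_trivial, mulVec_sub, sub_dotProduct, dotProduct_sub, hsymm] at this
  linarith

theorem dotProduct_le_sum_abs_s2 {x v : n → R} (hx : ∀ i, |x i| ≤ 1) : x ⬝ᵥ v ≤ ∑ i, |v i| :=
  Finset.sum_le_sum fun i _ => calc
    x i * v i ≤ |x i| * |v i| := by rw [← abs_mul]; exact le_abs_self _
    _ ≤ |v i| := mul_le_of_le_one_left (abs_nonneg _) (hx i)

theorem sum_abs_eq_dotProduct (v : n → R) :
    ∑ i, |v i| = (fun i => if 0 ≤ v i then 1 else -1) ⬝ᵥ v :=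
  Finset.sum_congr rfl fun i _ => by
    dsimp only
    split_ifs with h
    · rw [abs_of_nonneg h, one_mul]
    · rw [abs_of_neg (not_le.mp h), neg_one_mul]

theorem Matrix.PosSemidef.exists_sign_two_mul_sum_abs_mulVec_le [StarRing R] [TrivialStar R]
    {M : Matrix n n R} (hM : M.PosSemidef) (x : n → R) :
    ∃ t : n → R, (∀ i, t i = 1 ∨ t i = -1) ∧
      2 * ∑ i, |(M *ᵥ x) i| ≤ t ⬝ᵥ M *ᵥ t + x ⬝ᵥ M *ᵥ x := by
  refine ⟨_, fun i => ?_, (sum_abs_eq_dotProduct (M *ᵥ x)).symm ▸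
    hM.two_mul_dotProduct_mulVec_le _ x⟩
  split_ifs <;> simp

end

/-- For an m×m real symmetric PSD matrix M and the 2^m × m matrix
V whose rows enumerate all sign vectors in {-1,1}^m, the maximum of ‖Mx‖₁ over
x ∈ {-1,1}^m equals the maximum diagonal entry of V M Vᵀ. -/
theorem stmt2 (m : ℕ) (M : Matrix (Fin m) (Fin m) ℝ) (hM : M.PosSemidef)
    (V : Matrix (Fin m → Bool) (Fin m) ℝ)
    (hV : ∀ b i, V b i = if b i then 1 else -1) :
    sSup {y : ℝ | ∃ x : Fin m → ℝ, (∀ i, x i = 1 ∨ x i = -1) ∧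
        y = ∑ i, |M.mulVec x i|} =
    sSup {y : ℝ | ∃ b : Fin m → Bool, y = (V * M * Vᵀ) b b} := by
  set A := {y : ℝ | ∃ x : Fin m → ℝ, (∀ i, x i = 1 ∨ x i = -1) ∧ y = ∑ i, |M.mulVec x i|}
  set B := {y : ℝ | ∃ b : Fin m → Bool, y = (V * M * Vᵀ) b b}
  have row_sign : ∀ b i, V b i = 1 ∨ V b i = -1 := fun b i => by
    rw [hV]; split_ifs <;> simp
  have exists_row : ∀ x : Fin m → ℝ, (∀ i, x i = 1 ∨ x i = -1) → ∃ b, V b = x := fun x hx =>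
    ⟨fun i => decide (x i = 1), funext fun i => by rcases hx i with h | h <;> norm_num [hV, h]⟩
  have hB_bdd : BddAbove B := by
    refine ((Set.finite_range fun b => (V * M * Vᵀ) b b).subset ?_).bddAbove
    rintro _ ⟨b, rfl⟩
    exact ⟨b, rfl⟩
  have quad_le : ∀ b, V b ⬝ᵥ M *ᵥ V b ≤ sSup B := fun b =>
    le_csSup hB_bdd ⟨b, (mul_mul_transpose_apply V M b b).symm⟩
  have sum_abs_le : ∀ y ∈ A, y ≤ sSup B := by
    rintro _ ⟨x, hx, rfl⟩
    obtain ⟨t, ht, hle⟩ := hM.exists_sign_two_mul_sum_abs_mulVec_le x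
    obtain ⟨b, rfl⟩ := exists_row x hx
    obtain ⟨c, rfl⟩ := exists_row t ht
    linarith [quad_le b, quad_le c]
  refine le_antisymm (csSup_le ⟨_, V default, row_sign default, rfl⟩ sum_abs_le)
    (csSup_le ⟨_, default, rfl⟩ ?_)
  rintro _ ⟨b, rfl⟩
  rw [mul_mul_transpose_apply]
  refine (dotProduct_le_sum_abs_s2 fun i => ?_).trans
    (le_csSup ⟨sSup B, sum_abs_le⟩ ⟨V b, row_sign b, rfl⟩)
  rcases row_sign b i with h | h <;> simp [h]
end

section
/- Let K : ℕ × ℕ → ℝ be a symmetric positive semidefinite kernel such that the associated linear operator u ↦ (i ↦ Σ_j K(i,j)u(j)) is a bounded operator from ℓ∞ to ℓ1. Then Σ_i K(i,i) < ∞, i.e., K has finite trace. -/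
/-!
Average the quadratic form over all sign vectors `σ ∈ {±1}ⁿ`: since `∑_σ σ_i σ_j = 2ⁿ δ_ij`,
the mean of `σᵀ K_n σ` over `σ` is the trace `∑_{i<n} K i i` of the leading `n × n` block.
Each `σᵀ K_n σ` is at most `‖K σ‖₁ ≤ C`, by stability tested on `σ` extended by zero, so the
partial sums of the (nonnegative) diagonal are bounded by `C`.
-/

/-- A kernel on ℕ is positive semidefinite if every finite principal
submatrix is (symmetric) positive semidefinite. -/
def KernelPSD (K : ℕ → ℕ → ℝ) : Prop :=
  ∀ (m : ℕ) (p : Fin m → ℕ),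
    (Matrix.of fun a b : Fin m => K (p a) (p b)).PosSemidef

/-- BIBO stability of a kernel: the induced operator u ↦ (i ↦ Σ_j K i j * u j)
is a bounded operator from ℓ∞ to ℓ1 (sup over the ℓ∞ unit ball is finite). -/
def KernelStable (K : ℕ → ℕ → ℝ) : Prop :=
  ∃ C : ℝ, ∀ u : ℕ → ℝ, (∀ j, |u j| ≤ 1) →
    (∀ i, Summable fun j => K i j * u j) ∧
    Summable (fun i => |∑' j, K i j * u j|) ∧
    (∑' i, |∑' j, K i j * u j|) ≤ C

open Finset Matrix

section SignAveraging

variable {ι R : Type*} [Fintype ι] [DecidableEq ι] [CommRing R]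

-- Multiplying `σ` by the sign flip at `a` negates the summand, so the sum is its own negative.
theorem sum_units_int_mul_of_ne {a b : ι} (hab : a ≠ b) :
    ∑ σ : ι → ℤˣ, ((σ a * σ b : ℤˣ) : ℤ) = 0 := by
  have hflip := Equiv.sum_comp (Equiv.mulRight (Pi.mulSingle a (-1) : ι → ℤˣ))
    fun σ : ι → ℤˣ => ((σ a * σ b : ℤˣ) : ℤ)
  simp only [Equiv.coe_mulRight, Pi.mul_apply, Pi.mulSingle_eq_same,
    Pi.mulSingle_eq_of_ne hab.symm, mul_one, mul_neg_one, neg_mul, Units.val_neg,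
    sum_neg_distrib] at hflip
  omega

theorem sum_units_int_mul (a b : ι) :
    ∑ σ : ι → ℤˣ, ((σ a * σ b : ℤˣ) : ℤ) = if a = b then 2 ^ Fintype.card ι else 0 := by
  split_ifs with hab
  · subst hab
    simp [Int.units_mul_self, Fintype.card_units_int]
  · exact sum_units_int_mul_of_ne hab

theorem sum_units_int_dotProduct_mulVec (A : Matrix ι ι R) :
    ∑ σ : ι → ℤˣ, (fun i => ((σ i : ℤ) : R)) ⬝ᵥ A *ᵥ (fun i => ((σ i : ℤ) : R)) =
      2 ^ Fintype.card ι * A.trace := by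
  have hcast : ∀ a b : ι, ∑ σ : ι → ℤˣ, ((σ a : ℤ) : R) * (σ b : ℤ) =
      if a = b then 2 ^ Fintype.card ι else 0 := by
    intro a b
    have := congrArg (Int.cast : ℤ → R) (sum_units_int_mul a b)
    push_cast at this
    simpa [apply_ite (Int.cast : ℤ → R)] using this
  calc ∑ σ : ι → ℤˣ, (fun i => ((σ i : ℤ) : R)) ⬝ᵥ A *ᵥ (fun i => ((σ i : ℤ) : R))
      = ∑ i, ∑ j, A i j * ∑ σ : ι → ℤˣ, ((σ i : ℤ) : R) * (σ j : ℤ) := by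
        simp only [dotProduct, mulVec, mul_sum]
        rw [sum_comm]
        refine sum_congr rfl fun i _ => ?_
        rw [sum_comm]
        refine sum_congr rfl fun j _ => sum_congr rfl fun σ _ => by ring
    _ = 2 ^ Fintype.card ι * A.trace := by
        simp [hcast, trace, mul_sum, mul_comm]

end SignAveraging

theorem KernelPSD.diag_nonneg {K : ℕ → ℕ → ℝ} (hK : KernelPSD K) (i : ℕ) : 0 ≤ K i i :=
  (hK 1 fun _ => i).diag_nonneg (i := 0)

theorem KernelStable.exists_dotProduct_mulVec_le {K : ℕ → ℕ → ℝ} (hstab : KernelStable K) :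
    ∃ C, ∀ (n : ℕ) (v : Fin n → ℝ), (∀ i, |v i| ≤ 1) →
      v ⬝ᵥ (Matrix.of fun a b : Fin n => K a b) *ᵥ v ≤ C := by
  obtain ⟨C, hC⟩ := hstab
  refine ⟨C, fun n v hv => ?_⟩
  set u : ℕ → ℝ := fun j => if h : j < n then v ⟨j, h⟩ else 0
  have hu : ∀ j, |u j| ≤ 1 := fun j => by
    by_cases h : j < n <;> simp [u, h, hv]
  obtain ⟨-, hsum, hle⟩ := hC u hu
  have hrow : ∀ i, ∑' j, K i j * u j = ∑ j : Fin n, K i j * v j := fun i => by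
    rw [tsum_eq_sum (s := range n) fun j hj => by simp_all [u], sum_range]
    simp [u]
  calc v ⬝ᵥ (Matrix.of fun a b : Fin n => K a b) *ᵥ v
      ≤ ∑ i : Fin n, |∑ j : Fin n, K i j * v j| := by
        refine sum_le_sum fun i _ => ?_
        calc v i * ∑ j : Fin n, K i j * v j ≤ |v i * ∑ j : Fin n, K i j * v j| :=
              le_abs_self _
          _ ≤ |∑ j : Fin n, K i j * v j| := by
            rw [abs_mul]; exact mul_le_of_le_one_left (abs_nonneg _) (hv i)
    _ = ∑ i ∈ range n, |∑' j, K i j * u j| := by simp only [sum_range, hrow]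
    _ ≤ ∑' i, |∑' j, K i j * u j| := hsum.sum_le_tsum _ fun i _ => abs_nonneg _
    _ ≤ C := hle

theorem stmt4_general (K : ℕ → ℕ → ℝ)
    (hK : KernelPSD K) (hstab : KernelStable K) :
    Summable (fun i => K i i) := by
  obtain ⟨C, hC⟩ := hstab.exists_dotProduct_mulVec_le
  refine summable_of_sum_range_le (c := C) hK.diag_nonneg fun n => ?_
  have hsigns := sum_le_sum fun (σ : Fin n → ℤˣ) (_ : σ ∈ univ) =>
    hC n (fun i => ((σ i : ℤ) : ℝ)) fun i => by
      simp [← Int.cast_abs, Int.isUnit_iff_abs_eq.mp (σ i).isUnit]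
  have htrace : (Matrix.of fun a b : Fin n => K a b).trace = ∑ i ∈ range n, K i i := by
    simp [trace, sum_range]
  rw [sum_units_int_dotProduct_mulVec, htrace, sum_const, card_univ, Fintype.card_fun,
    Fintype.card_units_int, Fintype.card_fin, nsmul_eq_mul] at hsigns
  push_cast at hsigns
  exact le_of_mul_le_mul_left hsigns (by positivity)

/-- A BIBO stable symmetric PSD kernel has finite trace. -/
theorem stmt4 (K : ℕ → ℕ → ℝ) (hsym : ∀ i j, K i j = K j i)
    (hK : KernelPSD K) (hstab : KernelStable K) :
    Summable (fun i => K i i) :=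
  stmt4_general K hK hstab
end

section
/- Let K : ℕ × ℕ → ℝ be a symmetric positive semidefinite kernel whose diagonal satisfies K(i,i) ≥ c/i^δ for some c > 0 and δ ≤ 1 and all i ≥ 1. Then K is not BIBO stable, i.e., the RKHS induced by K is not contained in ℓ1. -/
open Finset

lemma exists_sign_sum_diag_le_quadForm {ι : Type*} [DecidableEq ι] (K : ι → ι → ℝ)
    (s : Finset ι) :
    ∃ ε : ι → ℝ, (∀ j, |ε j| ≤ 1) ∧ (∀ j ∉ s, ε j = 0) ∧
      ∑ i ∈ s, K i i ≤ ∑ i ∈ s, ∑ j ∈ s, ε i * K i j * ε j := by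
  induction s using Finset.induction_on with
  | empty => exact ⟨0, by simp, by simp, by simp⟩
  | insert a s ha ih =>
    obtain ⟨ε, hε_le, hε_zero, hε_trace⟩ := ih
    set t := ∑ j ∈ s, (K a j + K j a) * ε j
    set e : ℝ := if 0 ≤ t then 1 else -1
    have he_abs : |e| = 1 := by unfold e; split_ifs <;> simp
    have he_t : 0 ≤ e * t := by unfold e; split_ifs <;> linarith
    have he_sq : e * e = 1 := by unfold e; split_ifs <;> norm_num
    have he_t_eq : e * t = ∑ j ∈ s, e * K a j * ε j + ∑ i ∈ s, ε i * K i a * e := by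
      simp only [t, mul_sum, ← sum_add_distrib]
      exact sum_congr rfl fun j _ => by ring
    refine ⟨Function.update ε a e, fun j => ?_, fun j hj => ?_, ?_⟩
    · rcases eq_or_ne j a with rfl | hja
      · simp [he_abs]
      · simpa [hja] using hε_le j
    · rw [mem_insert, not_or] at hj
      simp [hj.1, hε_zero j hj.2]
    · have hupd : ∀ j ∈ s, Function.update ε a e j = ε j := fun j hj =>
        Function.update_of_ne (ne_of_mem_of_not_mem hj ha) _ _
      have hsplit : ∑ i ∈ insert a s, ∑ j ∈ insert a s,
            Function.update ε a e i * K i j * Function.update ε a e j =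
          K a a * (e * e) + e * t + ∑ i ∈ s, ∑ j ∈ s, ε i * K i j * ε j := by
        simp +contextual only [sum_insert ha, Function.update_self, hupd, he_t_eq,
          sum_add_distrib]
        ring
      rw [hsplit, sum_insert ha, he_sq]
      linarith

lemma KernelStable.exists_sum_diag_le {K : ℕ → ℕ → ℝ} (hK : KernelStable K) :
    ∃ C : ℝ, ∀ s : Finset ℕ, ∑ i ∈ s, K i i ≤ C := by
  obtain ⟨C, hC⟩ := hK
  refine ⟨C, fun s => ?_⟩
  obtain ⟨ε, hε_le, hε_zero, hε_trace⟩ := exists_sign_sum_diag_le_quadForm K s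
  obtain ⟨-, hsummable, hle⟩ := hC ε hε_le
  have hKε : ∀ i, ∑' j, K i j * ε j = ∑ j ∈ s, K i j * ε j := fun i =>
    tsum_eq_sum fun j hj => by rw [hε_zero j hj, mul_zero]
  calc ∑ i ∈ s, K i i
      ≤ ∑ i ∈ s, ε i * ∑ j ∈ s, K i j * ε j := by
        simpa only [mul_sum, mul_assoc] using hε_trace
    _ ≤ ∑ i ∈ s, |∑' j, K i j * ε j| := sum_le_sum fun i _ => by
        rw [hKε]
        exact (le_abs_self _).trans <| by
          rw [abs_mul]; exact mul_le_of_le_one_left (abs_nonneg _) (hε_le i)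
    _ ≤ ∑' i, |∑' j, K i j * ε j| := hsummable.sum_le_tsum s fun i _ => abs_nonneg _
    _ ≤ C := hle

theorem stmt10_general (K : ℕ → ℕ → ℝ) (c δ : ℝ) (hc : 0 < c) (hδ : δ ≤ 1)
    (hdiag : ∀ i : ℕ, 1 ≤ i → c / (i : ℝ) ^ δ ≤ K i i) :
    ¬ KernelStable K := by
  intro hK
  obtain ⟨C, hC⟩ := hK.exists_sum_diag_le
  have hshift : Summable fun i : ℕ => c / ((i + 1 : ℕ) : ℝ) ^ δ := by
    refine summable_of_sum_le (c := C) (fun i => by positivity) fun s => ?_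
    calc ∑ i ∈ s, c / ((i + 1 : ℕ) : ℝ) ^ δ
        ≤ ∑ i ∈ s, K (i + 1) (i + 1) := sum_le_sum fun i _ => hdiag (i + 1) i.succ_pos
      _ = ∑ i ∈ s.map (addRightEmbedding 1), K i i := by rw [sum_map]; rfl
      _ ≤ C := hC _
  have : Summable fun i : ℕ => ((i : ℝ) ^ δ)⁻¹ := by
    have := (summable_nat_add_iff (f := fun i : ℕ => c * ((i : ℝ) ^ δ)⁻¹) 1).mp hshift
    exact (summable_mul_left_iff hc.ne').mp this
  exact hδ.not_gt (Real.summable_nat_rpow_inv.mp this)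

/-- A symmetric PSD kernel whose diagonal satisfies
K(i,i) ≥ c/i^δ (for some c > 0, δ ≤ 1, all i ≥ 1) is not BIBO stable. -/
theorem stmt10 (K : ℕ → ℕ → ℝ) (hsym : ∀ i j, K i j = K j i)
    (hK : KernelPSD K) (c δ : ℝ) (hc : 0 < c) (hδ : δ ≤ 1)
    (hdiag : ∀ i : ℕ, 1 ≤ i → c / (i : ℝ) ^ δ ≤ K i i) :
    ¬ KernelStable K :=
  stmt10_general K c δ hc hδ hdiag
end

section
/- Let K : ℕ × ℕ → ℝ be a positive semidefinite kernel with Mercer expansion K(x,y) = Σ_i λ_i ρ_i(x)ρ_i(y), where {ρ_i} is an orthonormal basis of ℓ2, λ_i ≥ 0, and there exists A > 0 with ‖ρ_i‖_1 ≤ A whenever λ_i > 0. Then K is BIBO stable (induced operator bounded from ℓ∞ to ℓ1) if and only if Σ_i λ_i < ∞. -/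
/-!
If `K` is stable with bound `C`, then for every sign pattern `ε ∈ {±1}ⁿ` the quadratic form
`∑ εᵢ εⱼ K i j` is at most `C`; averaging over all `2ⁿ` patterns kills the off-diagonal terms,
so the partial traces `∑_{i<n} K i i` are bounded. Since `‖ρ_m‖₂ = 1`, Tonelli gives
`∑ₓ K x x = ∑ₘ λₘ`, hence `λ` is summable.

Conversely, the rank-one kernel `λₘ ρₘ ⊗ ρₘ` maps `ℓ∞` to `ℓ¹` with norm at most `λₘ ‖ρₘ‖₁²`,
and absolute convergence of the resulting double series shows that `K` is stable as soon as
`∑ₘ λₘ ‖ρₘ‖₁² ≤ A² ∑ₘ λₘ` is finite.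
-/

open Finset

theorem sum_signs_apply_mul_apply {ι : Type*} [Fintype ι] [DecidableEq ι] (i j : ι) :
    ∑ ε : ι → ℤˣ, ((ε i : ℤ) : ℝ) * (ε j : ℤ) = if i = j then (2 : ℝ) ^ Fintype.card ι else 0 := by
  split_ifs with hij
  · subst hij
    simp [← Int.cast_mul, ← Units.val_mul, Int.units_mul_self, Fintype.card_units_int]
  · have flip : Function.Involutive fun ε : ι → ℤˣ => Function.update ε j (-ε j) := by
      intro ε
      ext1 k
      rcases eq_or_ne k j with rfl | hk <;> simp [*]
    have := Equiv.sum_comp flip.toPerm fun ε : ι → ℤˣ => ((ε i : ℤ) : ℝ) * (ε j : ℤ)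
    simp only [Function.Involutive.coe_toPerm, Function.update_of_ne hij, Function.update_self,
      Units.val_neg, Int.cast_neg, mul_neg, sum_neg_distrib] at this
    linarith

theorem sum_diag_le_of_forall_signs_le {ι : Type*} [Fintype ι] (M : ι → ι → ℝ) (C : ℝ)
    (h : ∀ ε : ι → ℤˣ, ∑ i, ∑ j, ((ε i : ℤ) : ℝ) * (ε j : ℤ) * M i j ≤ C) :
    ∑ i, M i i ≤ C := by
  classical
  have averaged : ∑ ε : ι → ℤˣ, ∑ i, ∑ j, ((ε i : ℤ) : ℝ) * (ε j : ℤ) * M i j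
      = 2 ^ Fintype.card ι * ∑ i, M i i := by
    rw [sum_comm]
    simp_rw [sum_comm (γ := ι → ℤˣ), ← sum_mul, sum_signs_apply_mul_apply,
      ite_mul, zero_mul, sum_ite_eq, mem_univ, if_true, mul_sum]
  have hcard : (0 : ℝ) < 2 ^ Fintype.card ι := by positivity
  refine le_of_mul_le_mul_left ?_ hcard
  calc 2 ^ Fintype.card ι * ∑ i, M i i
      = ∑ ε : ι → ℤˣ, ∑ i, ∑ j, ((ε i : ℤ) : ℝ) * (ε j : ℤ) * M i j := averaged.symm
    _ ≤ ∑ _ε : ι → ℤˣ, C := sum_le_sum fun ε _ => h ε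
    _ = 2 ^ Fintype.card ι * C := by simp [Fintype.card_units_int]

theorem abs_units_int_cast (s : ℤˣ) : |((s : ℤ) : ℝ)| = 1 := by
  rcases Int.units_eq_one_or s with rfl | rfl <;> simp

theorem KernelStable.exists_sum_range_diag_le {K : ℕ → ℕ → ℝ} (hK : KernelStable K) :
    ∃ C, ∀ n, ∑ i ∈ range n, K i i ≤ C := by
  obtain ⟨C, hC⟩ := hK
  refine ⟨C, fun n => ?_⟩
  rw [← Fin.sum_univ_eq_sum_range (fun i => K i i)]
  refine sum_diag_le_of_forall_signs_le (fun i j : Fin n => K i j) C fun ε => ?_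
  set u : ℕ → ℝ := fun j => if h : j < n then ((ε ⟨j, h⟩ : ℤ) : ℝ) else 0
  have hu_abs : ∀ j, |u j| ≤ 1 := fun j => by
    by_cases h : j < n <;> simp [u, h, abs_units_int_cast]
  obtain ⟨-, hsum, hle⟩ := hC u hu_abs
  have hrow : ∀ i, ∑' j, K i j * u j = ∑ j : Fin n, K i j * ε j := fun i => by
    rw [tsum_eq_sum (s := range n) fun j hj => by simp_all [u],
      ← Fin.sum_univ_eq_sum_range (fun j => K i j * u j)]
    simp [u]
  calc ∑ i : Fin n, ∑ j : Fin n, ((ε i : ℤ) : ℝ) * (ε j : ℤ) * K i j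
      = ∑ i : Fin n, ((ε i : ℤ) : ℝ) * ∑' j, K i j * u j := by
        simp_rw [hrow, mul_sum, mul_comm (K _ _), mul_assoc]
    _ ≤ ∑ i : Fin n, |∑' j, K i j * u j| := sum_le_sum fun i _ => by
        simpa [abs_mul, abs_units_int_cast] using
          le_abs_self (((ε i : ℤ) : ℝ) * ∑' j, K i j * u j)
    _ = ∑ i ∈ range n, |∑' j, K i j * u j| :=
        Fin.sum_univ_eq_sum_range (fun i => |∑' j, K i j * u j|) n
    _ ≤ ∑' i, |∑' j, K i j * u j| := hsum.sum_le_tsum _ fun _ _ => abs_nonneg _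
    _ ≤ C := hle

theorem summable_of_sum_range_diag_le {K : ℕ → ℕ → ℝ} {lam : ℕ → ℝ} {rho : ℕ → ℕ → ℝ} {C : ℝ}
    (hlam : ∀ m, 0 ≤ lam m) (hnorm : ∀ m, HasSum (fun x => rho m x * rho m x) 1)
    (hdiag : ∀ x, HasSum (fun m => lam m * rho m x * rho m x) (K x x))
    (hC : ∀ n, ∑ x ∈ range n, K x x ≤ C) : Summable lam := by
  have hterm_nonneg : ∀ m x, 0 ≤ lam m * rho m x * rho m x := fun m x => by
    rw [mul_assoc]
    exact mul_nonneg (hlam m) (mul_self_nonneg _)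
  have htrace : Summable fun x => K x x :=
    summable_of_sum_range_le (fun x => HasSum.nonneg (hterm_nonneg · x) (hdiag x)) hC
  have hprod : Summable fun p : ℕ × ℕ => lam p.2 * rho p.2 p.1 * rho p.2 p.1 :=
    (summable_prod_of_nonneg fun p => hterm_nonneg _ _).2
      ⟨fun x => (hdiag x).summable, htrace.congr fun x => (hdiag x).tsum_eq.symm⟩
  refine hprod.prod_symm.prod.congr fun m => ?_
  simp_rw [Prod.swap, mul_assoc, tsum_mul_left, (hnorm m).tsum_eq, mul_one]

section SufficientCondition

variable {K : ℕ → ℕ → ℝ} {lam : ℕ → ℝ} {rho : ℕ → ℕ → ℝ}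

theorem summable_prod_mul_tsum_abs_mul_abs (hlam : ∀ m, 0 ≤ lam m)
    (hrho : ∀ m, Summable fun x => |rho m x|)
    (hsum : Summable fun m => lam m * (∑' x, |rho m x|) ^ 2) :
    Summable fun p : ℕ × ℕ => lam p.1 * (∑' x, |rho p.1 x|) * |rho p.1 p.2| := by
  have hr : ∀ m, 0 ≤ ∑' x, |rho m x| := fun m => tsum_nonneg fun _ => abs_nonneg _
  refine (summable_prod_of_nonneg fun p => ?_).2 ⟨fun m => ?_, ?_⟩
  · have := hlam p.1
    have := hr p.1
    positivity
  · exact (hrho m).mul_left (lam m * ∑' x, |rho m x|)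
  · refine hsum.congr fun m => ?_
    simp only [tsum_mul_left, sq, mul_assoc]

theorem summable_and_abs_tsum_kernel_mul_le (hlam : ∀ m, 0 ≤ lam m)
    (hrho : ∀ m, Summable fun x => |rho m x|)
    (hsum : Summable fun m => lam m * (∑' x, |rho m x|) ^ 2)
    (hK : ∀ x y, K x y = ∑' m, lam m * rho m x * rho m y)
    {u : ℕ → ℝ} (hu : ∀ j, |u j| ≤ 1) (i : ℕ) :
    Summable (fun j => K i j * u j) ∧
      |∑' j, K i j * u j| ≤ ∑' m, lam m * (∑' x, |rho m x|) * |rho m i| := by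
  set F : ℕ × ℕ → ℝ := fun p => lam p.1 * rho p.1 i * rho p.1 p.2 * u p.2
  set G : ℕ × ℕ → ℝ := fun p => lam p.1 * |rho p.1 i| * |rho p.1 p.2|
  have hG_nonneg : ∀ p, 0 ≤ G p := fun p => by have := hlam p.1; positivity
  have hG : Summable G := by
    refine (summable_prod_mul_tsum_abs_mul_abs hlam hrho hsum).of_nonneg_of_le hG_nonneg
      fun p => ?_
    have := hlam p.1
    simp only [G]
    gcongr
    exact (hrho p.1).le_tsum i fun _ _ => abs_nonneg _
  have hF_le : ∀ p, ‖F p‖ ≤ G p := fun p => by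
    simp only [F, G, Real.norm_eq_abs, abs_mul, abs_of_nonneg (hlam _)]
    exact mul_le_of_le_one_right (hG_nonneg p) (hu _)
  have hF : Summable F := hG.of_norm_bounded hF_le
  have hrow : ∀ j, K i j * u j = ∑' m, F (m, j) := fun j => by
    rw [hK, ← tsum_mul_right]
  refine ⟨hF.prod_symm.prod.congr fun j => (hrow j).symm, ?_⟩
  calc |∑' j, K i j * u j| = |∑' p, F p| := by
        rw [tsum_congr hrow, hF.tsum_comm (f := fun m j => F (m, j)), hF.tsum_prod]
    _ ≤ ∑' p, G p := (norm_tsum_le_tsum_norm hF.norm).trans (hF.norm.tsum_le_tsum hF_le hG)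
    _ = ∑' m, lam m * (∑' x, |rho m x|) * |rho m i| := by
        rw [hG.tsum_prod]
        refine tsum_congr fun m => ?_
        simp only [G, tsum_mul_left]
        ring

theorem kernelStable_of_summable_mul_sq_tsum_abs (hlam : ∀ m, 0 ≤ lam m)
    (hrho : ∀ m, Summable fun x => |rho m x|)
    (hsum : Summable fun m => lam m * (∑' x, |rho m x|) ^ 2)
    (hK : ∀ x y, K x y = ∑' m, lam m * rho m x * rho m y) : KernelStable K := by
  refine ⟨∑' m, lam m * (∑' x, |rho m x|) ^ 2, fun u hu => ?_⟩
  have hP := summable_prod_mul_tsum_abs_mul_abs hlam hrho hsum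
  have hrow := summable_and_abs_tsum_kernel_mul_le hlam hrho hsum hK hu
  have hdom : Summable fun i => ∑' m, lam m * (∑' x, |rho m x|) * |rho m i| := hP.prod_symm.prod
  have habs : Summable fun i => |∑' j, K i j * u j| :=
    hdom.of_nonneg_of_le (fun _ => abs_nonneg _) fun i => (hrow i).2
  refine ⟨fun i => (hrow i).1, habs, ?_⟩
  calc ∑' i, |∑' j, K i j * u j|
      ≤ ∑' i, ∑' m, lam m * (∑' x, |rho m x|) * |rho m i| :=
        habs.tsum_le_tsum (fun i => (hrow i).2) hdom
    _ = ∑' m, lam m * (∑' x, |rho m x|) ^ 2 := by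
        rw [hP.tsum_comm (f := fun m i => lam m * (∑' x, |rho m x|) * |rho m i|)]
        refine tsum_congr fun m => ?_
        rw [tsum_mul_left, sq, mul_assoc]

end SufficientCondition

theorem kernelStable_of_summable_of_tsum_abs_le {K : ℕ → ℕ → ℝ} {lam : ℕ → ℝ}
    {rho : ℕ → ℕ → ℝ} {A : ℝ} (hlam : ∀ m, 0 ≤ lam m)
    (hK : ∀ x y, K x y = ∑' m, lam m * rho m x * rho m y)
    (hbound : ∀ m, 0 < lam m → (Summable fun x => |rho m x|) ∧ (∑' x, |rho m x|) ≤ A)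
    (hsum : Summable lam) : KernelStable K := by
  -- Modes with `λₘ = 0` do not contribute to `K`, so they may be replaced by `0 ∈ ℓ¹`.
  set rho' : ℕ → ℕ → ℝ := fun m x => if 0 < lam m then rho m x else 0
  have hzero : ∀ m, ¬ 0 < lam m → lam m = 0 := fun m h => le_antisymm (not_lt.1 h) (hlam m)
  refine kernelStable_of_summable_mul_sq_tsum_abs (rho := rho') hlam (fun m => ?_) ?_
    fun x y => ?_
  · by_cases h : 0 < lam m
    · simpa [rho', h] using (hbound m h).1
    · simp [rho', h]
  · refine (hsum.mul_right (A ^ 2)).of_nonneg_of_le (fun m => by have := hlam m; positivity)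
      fun m => ?_
    by_cases h : 0 < lam m
    · have : 0 ≤ ∑' x, |rho m x| := tsum_nonneg fun x => abs_nonneg _
      simp only [rho', h, if_true]
      gcongr
      exact (hbound m h).2
    · simp [hzero m h]
  · rw [hK]
    refine tsum_congr fun m => ?_
    by_cases h : 0 < lam m
    · simp [rho', h]
    · simp [hzero m h]

theorem stmt19_general (K : ℕ → ℕ → ℝ)
    (lam : ℕ → ℝ) (hnonneg : ∀ i, 0 ≤ lam i) (rho : ℕ → ℕ → ℝ)
    (hl2 : ∀ i, Summable fun x => (rho i x) ^ 2)
    (horth : ∀ i j, (∑' x, rho i x * rho j x) = if i = j then 1 else 0)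
    (hmercer : ∀ x y, (Summable fun i => lam i * rho i x * rho i y) ∧
      K x y = ∑' i, lam i * rho i x * rho i y)
    (A : ℝ)
    (hbound : ∀ i, 0 < lam i →
      (Summable fun x => |rho i x|) ∧ (∑' x, |rho i x|) ≤ A) :
    KernelStable K ↔ Summable lam := by
  constructor
  · intro hstable
    obtain ⟨C, hC⟩ := hstable.exists_sum_range_diag_le
    refine summable_of_sum_range_diag_le (rho := rho) hnonneg (fun m => ?_) (fun x => ?_) hC
    · simpa [horth m m] using ((hl2 m).congr fun x => sq (rho m x)).hasSum
    · simpa only [← (hmercer x x).2] using (hmercer x x).1.hasSum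
  · exact kernelStable_of_summable_of_tsum_abs_le hnonneg (fun x y => (hmercer x y).2) hbound

/-- Let K be a PSD kernel with Mercer expansion
K(x,y) = Σ_i λ_i ρ_i(x)ρ_i(y), (ρ_i) an orthonormal basis of ℓ2, λ_i ≥ 0,
and suppose ‖ρ_i‖₁ ≤ A uniformly whenever λ_i > 0. Then K is BIBO stable
if and only if Σ_i λ_i < ∞. -/
theorem stmt19 (K : ℕ → ℕ → ℝ) (hK : KernelPSD K)
    (lam : ℕ → ℝ) (hnonneg : ∀ i, 0 ≤ lam i) (rho : ℕ → ℕ → ℝ)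
    (hl2 : ∀ i, Summable fun x => (rho i x) ^ 2)
    (horth : ∀ i j, (∑' x, rho i x * rho j x) = if i = j then 1 else 0)
    (hcomplete : ∀ v : ℕ → ℝ, (Summable fun x => (v x) ^ 2) →
      (∀ i, (∑' x, rho i x * v x) = 0) → v = 0)
    (hmercer : ∀ x y, (Summable fun i => lam i * rho i x * rho i y) ∧
      K x y = ∑' i, lam i * rho i x * rho i y)
    (A : ℝ) (hA : 0 < A)
    (hbound : ∀ i, 0 < lam i →
      (Summable fun x => |rho i x|) ∧ (∑' x, |rho i x|) ≤ A) :
    KernelStable K ↔ Summable lam :=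
  stmt19_general K lam hnonneg rho hl2 horth hmercer A hbound
end
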